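/- An ordinary polygon P = (V_0, …, V_{n-1}) in ℝ² is convex if and only if it is quasi-convex; that is, for a polygon with pairwise distinct vertices, edg P = ∂(conv P) if and only if edg P ⊆ ∂(conv P). -/

import Mathlib

/-!
Suppose the edges miss a boundary point `x` of `K = conv P`. Fix an interior point `z` and measure
angles around `z` with the branch cut along the ray through `x`. A ray from an interior point
meets `∂K` only once, so this angle is continuous and injective on `edg P ⊆ ∂K \ {x}`. Pick an
extreme vertex `E = V_k` whose angle lies strictly between those of two other extreme vertices.
An edge not ending at `E` cannot cross the angle of `E`, since it would pass through the extreme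
point `E`; as the vertices are distinct, `V_{k+1}, …, V_{k+n-1}` is a walk along such edges
through all other vertices, so they all lie on one side of that angle, a contradiction.

When the vertices are collinear, `edg P` is instead a connected subset of a line that contains the
vertices, hence it contains their convex hull.
-/

open Set

noncomputable section

/-- The Euclidean plane. -/
abbrev Pl := EuclideanSpace ℝ (Fin 2)

/-- The `j`-th vertex of the polygon given by the list `L`, with indices taken
cyclically (so that `V_n = V_0`). -/
def vtx (L : List Pl) (j : ℕ) : Pl := L.getD (j % L.length) 0

/-- The set of vertices of the polygon `L`. -/
def vertexSet (L : List Pl) : Set Pl := {x | x ∈ L}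

/-- The union of the edges `[V_i, V_{i+1}]`, `i = 0, …, n-1` (with `V_n = V_0`). -/
def edg (L : List Pl) : Set Pl :=
  ⋃ i ∈ Finset.range L.length, segment ℝ (vtx L i) (vtx L (i + 1))

/-- A polygon is convex if the union of its edges coincides with the boundary of
the convex hull of its vertex set. -/
def IsConvexPolygon (L : List Pl) : Prop :=
  edg L = frontier (convexHull ℝ (vertexSet L))

/-- A polygon is quasi-convex if the union of its edges is contained in the boundary
of the convex hull of its vertex set. -/
def IsQuasiConvex (L : List Pl) : Prop :=
  edg L ⊆ frontier (convexHull ℝ (vertexSet L))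

/-- A polygon is strict if any three of its vertices (with increasing indices)
are non-collinear. -/
def IsStrict (L : List Pl) : Prop :=
  ∀ i j k : ℕ, i < j → j < k → k < L.length →
    ¬ Collinear ℝ ({vtx L i, vtx L j, vtx L k} : Set Pl)

/-- The points of `S` lie to one side of the segment `[A, B]`: there is a line
(the zero set of `f · = c` with `f ≠ 0`) containing `A` and `B` which is the
boundary of a closed half-plane `{x | f x ≤ c}` containing `S`. -/
def OneSide (A B : Pl) (S : Set Pl) : Prop :=
  ∃ (f : Pl →ₗ[ℝ] ℝ) (c : ℝ), f ≠ 0 ∧ f A = c ∧ f B = c ∧ ∀ p ∈ S, f p ≤ c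

/-- `ℓ` is a line in the plane. -/
def IsLine (ℓ : Set Pl) : Prop :=
  ∃ (f : Pl →ₗ[ℝ] ℝ) (c : ℝ), f ≠ 0 ∧ ℓ = {x | f x = c}

/-- The line `ℓ` is supporting to the set `S`: it meets `S` and is the boundary of
a closed half-plane containing `S`. -/
def IsSuppLine (ℓ S : Set Pl) : Prop :=
  (ℓ ∩ S).Nonempty ∧
    ∃ (f : Pl →ₗ[ℝ] ℝ) (c : ℝ), f ≠ 0 ∧ ℓ = {x | f x = c} ∧ ∀ x ∈ S, f x ≤ c

/-- The half-open segment `[A, B) = {(1-t)A + tB : 0 ≤ t < 1}` if `A ≠ B`,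
and `∅` if `A = B`. -/
def hseg (A B : Pl) : Set Pl :=
  {x | A ≠ B ∧ ∃ t : ℝ, 0 ≤ t ∧ t < 1 ∧ x = (1 - t) • A + t • B}

/-- A 2-polytope: a compact convex subset of the plane of dimension 2 whose set of
extreme points is finite. -/
def IsPolytope2 (K : Set Pl) : Prop :=
  IsCompact K ∧ Convex ℝ K ∧
    Module.finrank ℝ (affineSpan ℝ K).direction = 2 ∧
    (Set.extremePoints ℝ K).Finite

section TopologicalVectorSpace

variable {E : Type*} [AddCommGroup E] [Module ℝ E] [TopologicalSpace E]
  [IsTopologicalAddGroup E] [ContinuousSMul ℝ E]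

theorem Convex.eq_of_sameRay_sub_of_mem_frontier {K : Set E} (hK : Convex ℝ K) {z y₁ y₂ : E}
    (hz : z ∈ interior K) (h₁ : y₁ ∈ frontier K) (h₂ : y₂ ∈ frontier K)
    (h : SameRay ℝ (y₁ - z) (y₂ - z)) : y₁ = y₂ := by
  have hne : ∀ {y}, y ∈ frontier K → y - z ≠ 0 := fun hy h0 =>
    hy.2 (sub_eq_zero.1 h0 ▸ hz)
  obtain ⟨r, hr, hr'⟩ := h.exists_pos_left (hne h₁) (hne h₂)
  wlog hr1 : r ≤ 1 generalizing y₁ y₂ r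
  · refine (this h₂ h₁ h.symm r⁻¹ (inv_pos.2 hr) ?_
      (inv_le_one_of_one_le₀ (le_of_not_ge hr1))).symm
    rw [← hr', smul_smul, inv_mul_cancel₀ hr.ne', one_smul]
  rcases hr1.lt_or_eq with hlt | rfl
  · -- `y₂` lies strictly between the interior point `z` and `y₁`
    have : y₁ + (1 - r) • (z - y₁) ∈ interior K :=
      hK.add_smul_sub_mem_interior' (frontier_subset_closure h₁) hz ⟨by linarith, by linarith⟩
    have hy₂ : y₁ + (1 - r) • (z - y₁) = y₂ := by
      rw [sub_eq_iff_eq_add.1 hr'.symm]; module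
    exact absurd (hy₂ ▸ this) h₂.2
  · simpa using hr'

theorem apply_lt_iff_of_notMem_segment {u : E → ℝ} {a b c : E}
    (hinj : InjOn u (insert c (segment ℝ a b))) (hcont : ContinuousOn u (segment ℝ a b))
    (hc : c ∉ segment ℝ a b) : u a < u c ↔ u b < u c := by
  have hcross : u c ∉ uIcc (u a) (u b) := by
    intro h
    have himage := (convex_segment a b).isPreconnected.image u hcont
    obtain ⟨p, hp, hpc⟩ := himage.ordConnected.uIcc_subset
      (mem_image_of_mem u (left_mem_segment ℝ a b))
      (mem_image_of_mem u (right_mem_segment ℝ a b)) h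
    exact hc (hinj (mem_insert_of_mem _ hp) (mem_insert _ _) hpc ▸ hp)
  rw [mem_uIcc] at hcross
  grind

end TopologicalVectorSpace

theorem IsPreconnected.convex_of_collinear {E : Type*} [NormedAddCommGroup E]
    [InnerProductSpace ℝ E] {t : Set E} (ht : IsPreconnected t) (hcol : Collinear ℝ t) :
    Convex ℝ t := by
  obtain ⟨p₀, v, hv⟩ := (collinear_iff_exists_forall_eq_smul_vadd t).1 hcol
  rcases eq_or_ne v 0 with rfl | hv0
  · refine Set.Subsingleton.convex fun p hp q hq => ?_
    obtain ⟨_, rfl⟩ := hv p hp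
    obtain ⟨_, rfl⟩ := hv q hq
    simp
  let φ : E → ℝ := fun p => inner ℝ v (p - p₀) / inner ℝ v v
  let g : ℝ →ᵃ[ℝ] E := AffineMap.lineMap p₀ (v +ᵥ p₀)
  have hgφ : ∀ p ∈ t, g (φ p) = p := by
    intro p hp
    obtain ⟨r, rfl⟩ := hv p hp
    simp [φ, g, AffineMap.lineMap_apply, inner_smul_right, hv0]
  have ht' : g '' (φ '' t) = t := by
    rw [image_image]; exact (image_congr hgφ).trans (image_id' t)
  rw [← ht']
  exact ((ht.image φ (by fun_prop)).convex).affine_image g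

theorem collinear_convexHull_iff {k V : Type*} [Field k] [LinearOrder k]
    [IsStrictOrderedRing k] [AddCommGroup V] [Module k V] {s : Set V} :
    Collinear k (convexHull k s) ↔ Collinear k s := by
  rw [Collinear, Collinear, ← direction_affineSpan, ← direction_affineSpan, affineSpan_convexHull]

theorem affineSpan_eq_top_of_not_collinear {k V P : Type*} [Field k] [AddCommGroup V]
    [Module k V] [AddTorsor V P] [FiniteDimensional k V] (h2 : Module.finrank k V = 2)
    {s : Set P} (hs : ¬Collinear k s) : affineSpan k s = ⊤ := by
  have hne : s.Nonempty := nonempty_iff_ne_empty.2 fun h => hs (h ▸ collinear_empty k P)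
  rw [← AffineSubspace.direction_eq_top_iff_of_nonempty (hne.mono (subset_affineSpan k s)),
    direction_affineSpan]
  refine Submodule.eq_top_of_finrank_eq (le_antisymm (Submodule.finrank_le _) ?_)
  rw [collinear_iff_finrank_le_one] at hs
  omega

theorem exists_lt_lt_of_not_collinear {k V P β : Type*} [DivisionRing k] [AddCommGroup V]
    [Module k V] [AddTorsor V P] [LinearOrder β] {s : Set P} (hs : s.Finite)
    (hcol : ¬Collinear k s) {u : P → β} (hu : InjOn u s) :
    ∃ p ∈ s, ∃ e ∈ s, ∃ q ∈ s, u p < u e ∧ u e < u q := by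
  have hne : s.Nonempty := nonempty_iff_ne_empty.2 fun h => hcol (h ▸ collinear_empty k P)
  obtain ⟨p, hp, hmin⟩ := s.exists_min_image u hs hne
  obtain ⟨q, hq, hmax⟩ := s.exists_max_image u hs hne
  obtain ⟨e, he, hepq⟩ : ∃ e ∈ s, e ∉ ({p, q} : Set P) :=
    not_subset.1 fun h => hcol ((collinear_pair k p q).subset h)
  simp only [mem_insert_iff, mem_singleton_iff, not_or] at hepq
  exact ⟨p, hp, e, he, q, hq, (hmin e he).lt_of_ne fun h => hepq.1 (hu he hp h.symm),
    (hmax e he).lt_of_ne fun h => hepq.2 (hu he hq h)⟩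

theorem not_collinear_extremePoints_convexHull {E : Type*} [NormedAddCommGroup E]
    [NormedSpace ℝ E] {s : Set E} (hs : s.Finite) (hcol : ¬Collinear ℝ s) :
    ¬Collinear ℝ (extremePoints ℝ (convexHull ℝ s)) := by
  intro hW
  have hWfin : (extremePoints ℝ (convexHull ℝ s)).Finite :=
    hs.subset extremePoints_convexHull_subset
  have hK :=
    closure_convexHull_extremePoints (hs.isCompact_convexHull ℝ) (convex_convexHull ℝ s)
  rw [(hWfin.isCompact_convexHull ℝ).isClosed.closure_eq] at hK
  exact hcol ((collinear_convexHull_iff.2 hW).subset ((subset_convexHull ℝ s).trans hK.ge))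

namespace Complex

theorem sameRay_of_arg_div_eq_arg_div {a b c : ℂ} (hc : c ≠ 0)
    (h : arg (a / c) = arg (b / c)) : SameRay ℝ a b := by
  simpa [div_mul_cancel₀ _ hc] using (sameRay_of_arg_eq h).map (LinearMap.mulRight ℝ c)

open scoped ComplexOrder in
theorem continuousAt_arg_div {a c : ℂ} (h : ¬SameRay ℝ a (-c)) :
    ContinuousAt (fun w => arg (w / c)) a := by
  refine (continuousAt_arg ?_).comp (continuous_id.div_const c).continuousAt
  rw [mem_slitPlane_iff_not_le_zero]
  intro hle
  rw [sameRay_iff_arg_div_eq_zero, div_neg, arg_eq_zero_iff_zero_le] at h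
  exact h (neg_nonneg.2 hle)

end Complex

def toComplex : Pl ≃ₗᵢ[ℝ] ℂ := Complex.orthonormalBasisOneI.repr.symm

/-- The argument of `y - z` measured from the direction `z - x`: its branch cut is the ray from
`z` through `x`. -/
def rayAngle (z x y : Pl) : ℝ := Complex.arg (toComplex (y - z) / toComplex (z - x))

theorem rayAngle_injOn {K : Set Pl} (hK : Convex ℝ K) {z x : Pl} (hz : z ∈ interior K)
    (hxz : x ≠ z) : InjOn (rayAngle z x) (frontier K) := by
  intro y₁ h₁ y₂ h₂ h
  have hc : toComplex (z - x) ≠ 0 := by simpa [sub_eq_zero] using hxz.symm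
  refine hK.eq_of_sameRay_sub_of_mem_frontier hz h₁ h₂ ?_
  exact (SameRay.sameRay_map_iff toComplex.toLinearEquiv).1
    (Complex.sameRay_of_arg_div_eq_arg_div hc h)

theorem continuousAt_rayAngle {z x y : Pl} (h : ¬SameRay ℝ (y - z) (x - z)) :
    ContinuousAt (rayAngle z x) y := by
  have h' : ¬SameRay ℝ (toComplex (y - z)) (-toComplex (z - x)) := by
    rwa [← map_neg, neg_sub, ← LinearIsometryEquiv.coe_toLinearEquiv,
      SameRay.sameRay_map_iff]
  exact (Complex.continuousAt_arg_div h').comp (f := fun y => toComplex (y - z))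
    (by fun_prop)

section Polygon

variable {L : List Pl}

theorem vtx_add_length (L : List Pl) (i : ℕ) : vtx L (i + L.length) = vtx L i := by
  simp [vtx]

theorem vtx_of_lt {j : ℕ} (hj : j < L.length) : vtx L j = L[j] := by
  simp [vtx, Nat.mod_eq_of_lt hj, hj]

theorem vtx_mem (hL : L ≠ []) (i : ℕ) : vtx L i ∈ L := by
  have hn : 0 < L.length := List.length_pos_iff.2 hL
  rw [vtx, List.getD_eq_getElem _ _ (Nat.mod_lt i hn)]
  exact List.getElem_mem _

theorem vtx_add_ne_vtx (hord : L.Nodup) (k : ℕ) {m : ℕ} (hm0 : 0 < m) (hmn : m < L.length) :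
    vtx L (k + m) ≠ vtx L k := by
  have hn : 0 < L.length := hm0.trans hmn
  intro h
  simp only [vtx, List.getD_eq_getElem _ _ (Nat.mod_lt _ hn)] at h
  have hmod : k + m ≡ k + 0 [MOD L.length] := hord.getElem_inj_iff.1 h
  have hdvd : L.length ∣ m := Nat.modEq_zero_iff_dvd.1 (hmod.add_left_cancel' k)
  exact (Nat.eq_zero_of_dvd_of_lt hdvd hmn).not_gt hm0

theorem exists_vtx_add_eq {k : ℕ} (hk : k < L.length) {p : Pl} (hp : p ∈ L) :
    ∃ m < L.length, vtx L (k + m) = p := by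
  obtain ⟨j, hj, rfl⟩ := List.mem_iff_getElem.1 hp
  rcases le_or_gt k j with hkj | hjk
  · exact ⟨j - k, by omega, by rw [Nat.add_sub_cancel' hkj, vtx_of_lt hj]⟩
  · refine ⟨j + L.length - k, by omega, ?_⟩
    rw [Nat.add_sub_cancel' (by omega), vtx_add_length, vtx_of_lt hj]

theorem iff_of_forall_edge_avoiding (hord : L.Nodup) {k : ℕ} (hk : k < L.length)
    {Q : Pl → Prop}
    (hQ : ∀ i, vtx L i ≠ vtx L k → vtx L (i + 1) ≠ vtx L k → (Q (vtx L i) ↔ Q (vtx L (i + 1))))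
    {p q : Pl} (hp : p ∈ L) (hq : q ∈ L) (hpk : p ≠ vtx L k) (hqk : q ≠ vtx L k) :
    Q p ↔ Q q := by
  have hwalk : ∀ m, 0 < m → m < L.length → (Q (vtx L (k + m)) ↔ Q (vtx L (k + 1))) := by
    intro m hm0 hmn
    induction m with
    | zero => omega
    | succ m ih =>
      rcases Nat.eq_zero_or_pos m with rfl | hm
      · rfl
      · rw [← ih hm (by omega)]
        exact (hQ (k + m) (vtx_add_ne_vtx hord k hm (by omega))
          (vtx_add_ne_vtx hord k hm0 hmn)).symm
  have hside : ∀ p ∈ L, p ≠ vtx L k → (Q p ↔ Q (vtx L (k + 1))) := by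
    intro p hp hpk
    obtain ⟨m, hmn, rfl⟩ := exists_vtx_add_eq hk hp
    exact hwalk m (Nat.pos_of_ne_zero fun h => hpk (by rw [h, add_zero])) hmn
  exact (hside p hp hpk).trans (hside q hq hqk).symm

theorem segment_subset_edg (hL : L ≠ []) (i : ℕ) :
    segment ℝ (vtx L i) (vtx L (i + 1)) ⊆ edg L := by
  have hn : 0 < L.length := List.length_pos_iff.2 hL
  have hvtx : ∀ j, vtx L (j % L.length) = vtx L j := fun j => by simp [vtx]
  have hsucc : vtx L (i % L.length + 1) = vtx L (i + 1) := by
    rw [← hvtx, Nat.mod_add_mod, hvtx]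
  rw [← hvtx i, ← hsucc]
  exact subset_biUnion_of_mem (u := fun j => segment ℝ (vtx L j) (vtx L (j + 1)))
    (Finset.mem_range.2 (Nat.mod_lt i hn))

theorem vertexSet_subset_edg (L : List Pl) : vertexSet L ⊆ edg L := by
  intro p hp
  have hL : L ≠ [] := List.ne_nil_of_mem hp
  obtain ⟨j, hj, rfl⟩ := List.mem_iff_getElem.1 hp
  exact vtx_of_lt hj ▸ segment_subset_edg hL j (left_mem_segment ℝ _ _)

theorem edg_subset_convexHull (L : List Pl) : edg L ⊆ convexHull ℝ (vertexSet L) := by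
  refine iUnion₂_subset fun i _ => ?_
  have hL : L ≠ [] := by rintro rfl; simp at *
  exact segment_subset_convexHull (vtx_mem hL i) (vtx_mem hL (i + 1))

theorem isPreconnected_edg (L : List Pl) : IsPreconnected (edg L) := by
  have : edg L = ⋃ i ∈ Iio L.length, segment ℝ (vtx L i) (vtx L (i + 1)) := by
    simp [edg]
  rw [this]
  refine IsPreconnected.biUnion_of_chain ordConnected_Iio
    (fun i _ => (convex_segment _ _).isPreconnected) fun i _ _ => ?_
  exact ⟨vtx L (i + 1), right_mem_segment ℝ _ _, by simpa using left_mem_segment ℝ _ _⟩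

end Polygon

theorem lt_iff_lt_of_mem_extremePoints {L : List Pl} (hord : L.Nodup) {u : Pl → ℝ}
    (hinj : InjOn u (edg L)) (hcont : ContinuousOn u (edg L)) {e p q : Pl}
    (he : e ∈ extremePoints ℝ (convexHull ℝ (vertexSet L))) (hp : p ∈ L) (hq : q ∈ L)
    (hpe : p ≠ e) (hqe : q ≠ e) : u p < u e ↔ u q < u e := by
  have heL : e ∈ vertexSet L := extremePoints_convexHull_subset he
  have hL : L ≠ [] := List.ne_nil_of_mem heL
  obtain ⟨k, hk, rfl⟩ := List.mem_iff_getElem.1 heL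
  rw [← vtx_of_lt hk] at he hpe hqe ⊢
  have hedge : ∀ i, vtx L i ≠ vtx L k → vtx L (i + 1) ≠ vtx L k →
      (u (vtx L i) < u (vtx L k) ↔ u (vtx L (i + 1)) < u (vtx L k)) := by
    intro i hi hi'
    have hseg := segment_subset_edg hL i
    refine apply_lt_iff_of_notMem_segment (hinj.mono (insert_subset ?_ hseg))
      (hcont.mono hseg) fun hks => ?_
    · exact vertexSet_subset_edg L (vtx_mem hL k)
    · rcases (mem_extremePoints_iff_forall_segment.1 he).2 _
        (subset_convexHull ℝ _ (vtx_mem hL i)) _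
        (subset_convexHull ℝ _ (vtx_mem hL (i + 1))) hks with h | h
      exacts [hi h, hi' h]
  exact iff_of_forall_edge_avoiding hord hk (Q := (u · < u (vtx L k))) hedge hp hq hpe hqe

theorem convexHull_subset_edg_of_collinear {L : List Pl} (hV : Collinear ℝ (vertexSet L)) :
    convexHull ℝ (vertexSet L) ⊆ edg L :=
  convexHull_min (vertexSet_subset_edg L) <| (isPreconnected_edg L).convex_of_collinear <|
    (collinear_convexHull_iff.2 hV).subset (edg_subset_convexHull L)

theorem frontier_subset_edg_of_not_collinear {L : List Pl} (hord : L.Nodup)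
    (hq : IsQuasiConvex L) (hV : ¬Collinear ℝ (vertexSet L)) :
    frontier (convexHull ℝ (vertexSet L)) ⊆ edg L := by
  set K := convexHull ℝ (vertexSet L)
  have hVfin : (vertexSet L).Finite := L.finite_toSet
  have hKconv : Convex ℝ K := convex_convexHull ℝ _
  intro x hx
  by_contra hxe
  obtain ⟨z, hz⟩ : (interior K).Nonempty := by
    rw [hKconv.interior_nonempty_iff_affineSpan_eq_top, affineSpan_convexHull]
    exact affineSpan_eq_top_of_not_collinear finrank_euclideanSpace_fin hV
  have hxz : x ≠ z := fun h => hx.2 (h ▸ hz)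
  set u := rayAngle z x
  have hinj : InjOn u (edg L) := (rayAngle_injOn hKconv hz hxz).mono hq
  have hcont : ContinuousOn u (edg L) := fun p hp =>
    (continuousAt_rayAngle fun hray =>
      hxe (hKconv.eq_of_sameRay_sub_of_mem_frontier hz (hq hp) hx hray ▸ hp)).continuousWithinAt
  have hW : extremePoints ℝ K ⊆ vertexSet L := extremePoints_convexHull_subset
  obtain ⟨P, hP, E, hE, Q, hQ, hPE, hEQ⟩ :=
    exists_lt_lt_of_not_collinear (hVfin.subset hW)
      (not_collinear_extremePoints_convexHull hVfin hV)
      (hinj.mono (hW.trans (vertexSet_subset_edg L)))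
  have hside := lt_iff_lt_of_mem_extremePoints hord hinj hcont hE (hW hP) (hW hQ)
    (ne_of_apply_ne u hPE.ne) (ne_of_apply_ne u hEQ.ne')
  exact hEQ.not_gt (hside.1 hPE)

/-- an ordinary polygon is convex iff it is quasi-convex. -/
theorem stmt_7 (L : List Pl) (hord : L.Nodup) :
    IsConvexPolygon L ↔ IsQuasiConvex L := by
  refine ⟨Eq.subset, fun hq => hq.antisymm ?_⟩
  by_cases hV : Collinear ℝ (vertexSet L)
  · exact (L.finite_toSet.isCompact_convexHull ℝ).isClosed.frontier_subset.trans
      (convexHull_subset_edg_of_collinear hV)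
  · exact frontier_subset_edg_of_not_collinear hord hq hV
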